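/- Let c_n denote the number of closable Motzkin trees with exactly n nodes and m_n the number of all Motzkin trees with exactly n nodes. Then c_0 = 0, c_1 = 0, and for every n ≥ 2, c_n = m_{n-1} + Σ_{i+j=n-1, i≥1, j≥1} c_i · c_j. -/

import Mathlib

/-- Motzkin trees (binary-unary trees): leaf `v`, unary `l`, binary `a`. -/
inductive Mot : Type
  | v : Mot
  | l : Mot → Mot
  | a : Mot → Mot → Mot
deriving DecidableEq

/-- Lambda terms in de Bruijn form. -/
inductive Lam : Type
  | v : Nat → Lam
  | l : Lam → Lam
  | a : Lam → Lam → Lam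
deriving DecidableEq

/-- `t` is closed at depth `d`. -/
def Lam.closedAt : Lam → Nat → Prop
  | .v i, d => i < d
  | .l t, d => t.closedAt (d + 1)
  | .a s t, d => s.closedAt d ∧ t.closedAt d

/-- The Motzkin-tree skeleton of a de Bruijn term. -/
def Lam.skel : Lam → Mot
  | .v _ => .v
  | .l t => .l t.skel
  | .a s t => .a s.skel t.skel

/-- Total node count of a Motzkin tree. -/
def Mot.nodes : Mot → ℕ
  | .v => 1
  | .l t => 1 + t.nodes
  | .a s t => 1 + s.nodes + t.nodes

/-- A Motzkin tree is closable if it is the skeleton of at least one closed term. -/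
def Mot.Closable (X : Mot) : Prop := ∃ t : Lam, t.closedAt 0 ∧ t.skel = X

/-- `m n` is the number of Motzkin trees with exactly `n` nodes. -/
noncomputable def m (n : ℕ) : ℕ := Nat.card {t : Mot // t.nodes = n}

/-- `c n` is the number of closable Motzkin trees with exactly `n` nodes. -/
noncomputable def c (n : ℕ) : ℕ := Nat.card {t : Mot // t.nodes = n ∧ t.Closable}


/-! A leaf `v` alone is never closable, `l t` always is (label every leaf of `t` with index `0`),
and `a s t` is closable iff both `s` and `t` are. So the closable trees with `n + 2` nodes are the
`l t` with `t` arbitrary of `n + 1` nodes together with the `a s t` with `s`, `t` closable of node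
counts summing to `n + 1`, which gives the recursion. Closable trees have at least two nodes, so
`c 0 = c 1 = 0` and the terms with a zero index vanish. -/

open Finset

namespace Mot

lemma nodes_pos (t : Mot) : 0 < t.nodes := by
  cases t <;> simp only [nodes] <;> omega

def labelZero : Mot → Lam
  | .v => .v 0
  | .l t => .l t.labelZero
  | .a s t => .a s.labelZero t.labelZero

lemma labelZero_closedAt_succ (t : Mot) (d : ℕ) : t.labelZero.closedAt (d + 1) := by
  induction t generalizing d with
  | v => exact Nat.succ_pos d
  | l t ih => exact ih (d + 1)
  | a s t ihs iht => exact ⟨ihs d, iht d⟩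

lemma skel_labelZero (t : Mot) : t.labelZero.skel = t := by
  induction t <;> simp [labelZero, Lam.skel, *]

lemma not_closable_v : ¬ Mot.v.Closable := by
  rintro ⟨_ | _ | _, hc, hs⟩ <;> simp_all [Lam.closedAt, Lam.skel]

lemma closable_l (t : Mot) : (Mot.l t).Closable :=
  ⟨.l t.labelZero, t.labelZero_closedAt_succ 0, by rw [Lam.skel, skel_labelZero]⟩

lemma closable_a_iff {s t : Mot} : (Mot.a s t).Closable ↔ s.Closable ∧ t.Closable := by
  constructor
  · rintro ⟨_ | _ | ⟨u, w⟩, hc, hs⟩ <;> simp only [Lam.skel, reduceCtorEq, a.injEq] at hs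
    exact ⟨⟨u, hc.1, hs.1⟩, ⟨w, hc.2, hs.2⟩⟩
  · rintro ⟨⟨u, hu, rfl⟩, ⟨w, hw, rfl⟩⟩
    exact ⟨.a u w, ⟨hu, hw⟩, rfl⟩

lemma Closable.two_le_nodes {t : Mot} (ht : t.Closable) : 2 ≤ t.nodes := by
  rcases t with _ | s | ⟨s, u⟩
  · exact absurd ht not_closable_v
  · have := s.nodes_pos
    simp only [nodes]
    omega
  · have := s.nodes_pos
    have := u.nodes_pos
    simp only [nodes]
    omega

lemma finite_setOf_nodes_le (n : ℕ) : {t : Mot | t.nodes ≤ n}.Finite := by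
  induction n with
  | zero => exact Set.finite_empty.subset fun t ht => absurd ht t.nodes_pos.not_ge
  | succ n ih =>
    refine ((ih.image l).union (ih.image2 a ih)).insert v |>.subset ?_
    rintro (_ | s | ⟨s, u⟩) ht
    · exact Set.mem_insert _ _
    · exact .inr (.inl ⟨s, by simp only [nodes, Set.mem_ofPred_eq] at ht ⊢; omega, rfl⟩)
    · simp only [nodes, Set.mem_ofPred_eq] at ht
      have := s.nodes_pos
      have := u.nodes_pos
      exact .inr (.inr ⟨s, by simp only [Set.mem_ofPred_eq]; omega, u,
        by simp only [Set.mem_ofPred_eq]; omega, rfl⟩)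

lemma finite_setOf_nodes_eq (n : ℕ) : {t : Mot | t.nodes = n}.Finite :=
  (finite_setOf_nodes_le n).subset fun _ => le_of_eq

noncomputable def ofNodes (n : ℕ) : Finset Mot := (finite_setOf_nodes_eq n).toFinset

noncomputable def closableOfNodes (n : ℕ) : Finset Mot :=
  ((finite_setOf_nodes_eq n).subset fun _ => And.left :
    {t : Mot | t.nodes = n ∧ t.Closable}.Finite).toFinset

@[simp] lemma mem_ofNodes {n : ℕ} {t : Mot} : t ∈ ofNodes n ↔ t.nodes = n := by
  simp [ofNodes]

@[simp] lemma mem_closableOfNodes {n : ℕ} {t : Mot} :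
    t ∈ closableOfNodes n ↔ t.nodes = n ∧ t.Closable := by
  simp [closableOfNodes]

lemma uncurry_a_injective : Function.Injective (Function.uncurry a) :=
  fun _ _ h => Prod.ext (a.inj h).1 (a.inj h).2

lemma closableOfNodes_add_two (n : ℕ) :
    closableOfNodes (n + 2) = (ofNodes (n + 1)).image l ∪
      (antidiagonal (n + 1)).biUnion fun p =>
        (closableOfNodes p.1 ×ˢ closableOfNodes p.2).image (Function.uncurry a) := by
  ext (_ | s | ⟨s, u⟩)
  · simp [not_closable_v]
  · simp [nodes, closable_l, add_comm 1]
  · simp [nodes, closable_a_iff, add_comm 1, add_right_comm _ 1]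

lemma card_closableOfNodes_add_two (n : ℕ) :
    #(closableOfNodes (n + 2)) = #(ofNodes (n + 1)) +
      ∑ p ∈ antidiagonal (n + 1), #(closableOfNodes p.1) * #(closableOfNodes p.2) := by
  rw [closableOfNodes_add_two, card_union_of_disjoint, card_image_of_injective _ fun _ _ => l.inj,
    card_biUnion]
  · simp only [card_image_of_injective _ uncurry_a_injective, card_product]
  · intro p _ q _ hpq
    simp only [Function.onFun, disjoint_left, mem_image, mem_product, mem_closableOfNodes,
      Prod.exists, Function.uncurry_apply_pair]
    rintro _ ⟨s, u, ⟨⟨hs, -⟩, hu, -⟩, rfl⟩ ⟨s', u', ⟨⟨hs', -⟩, hu', -⟩, h⟩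
    obtain ⟨rfl, rfl⟩ := a.inj h
    exact hpq (Prod.ext (hs.symm.trans hs') (hu.symm.trans hu'))
  · simp [disjoint_left]

end Mot

lemma m_eq_card (n : ℕ) : m n = #(Mot.ofNodes n) :=
  Nat.card_eq_card_finite_toFinset _

lemma c_eq_card (n : ℕ) : c n = #(Mot.closableOfNodes n) :=
  Nat.card_eq_card_finite_toFinset _

lemma c_eq_zero_of_lt_two {n : ℕ} (hn : n < 2) : c n = 0 :=
  Nat.card_eq_zero.mpr (.inl ⟨fun ⟨_, hnodes, ht⟩ => by have := ht.two_le_nodes; omega⟩)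

lemma c_add_two (n : ℕ) :
    c (n + 2) = m (n + 1) + ∑ p ∈ antidiagonal (n + 1), c p.1 * c p.2 := by
  simp only [c_eq_card, m_eq_card]
  exact Mot.card_closableOfNodes_add_two n

theorem stmt7 :
    c 0 = 0 ∧ c 1 = 0 ∧
    ∀ n : ℕ, 2 ≤ n →
      c n = m (n - 1) +
        ∑ p ∈ (Finset.HasAntidiagonal.antidiagonal (n - 1)).filter (fun p => 1 ≤ p.1 ∧ 1 ≤ p.2),
          c p.1 * c p.2 := by
  refine ⟨c_eq_zero_of_lt_two (by norm_num), c_eq_zero_of_lt_two (by norm_num), fun n hn => ?_⟩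
  obtain ⟨k, rfl⟩ := Nat.exists_eq_add_of_le' hn
  have one_le_of_c_ne_zero {i : ℕ} (hi : c i ≠ 0) : 1 ≤ i := by
    by_contra h
    exact hi (c_eq_zero_of_lt_two (by omega))
  rw [Finset.sum_filter_of_ne fun p _ hp =>
    ⟨one_le_of_c_ne_zero (left_ne_zero_of_mul hp), one_le_of_c_ne_zero (right_ne_zero_of_mul hp)⟩]
  exact c_add_two k
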